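/- Let K be a field complete for a non-archimedean valuation (not necessarily discrete). Every unit of the Robba ring R_K lies in the bounded subring R_K^bd, i.e., a Laurent series f = Σ a_i T^i that is invertible in R_K has bounded coefficients. -/

import Mathlib

open scoped NNReal ENNReal

/-!
STATEMENT 2: Every unit of the Robba ring `R_K` over a complete non-archimedean field `K`
lies in the bounded subring `R_K^bd`: if `f = Σ a_i T^i` is invertible in `R_K` then its
coefficients are bounded.

Laurent series are represented by their coefficient functions `ℤ → K`; invertibility of
`f` in `R_K` means that there is `g ∈ R_K` with `f·g = 1` (convolution product).
-/

/-- `f` converges on some annulus `ρ₀ ≤ |T| < 1` (i.e. `0 < v_K(T) ≤ r`): membership in `R_K`. -/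
def MemRobba {K : Type*} [NontriviallyNormedField K] (f : ℤ → K) : Prop :=
  ∃ ρ₀ ∈ Set.Ioo (0 : ℝ≥0) 1, ∀ ρ ∈ Set.Ico ρ₀ (1 : ℝ≥0),
    Filter.Tendsto (fun i : ℤ => (‖f i‖₊ * ρ ^ i : ℝ≥0)) Filter.cofinite (nhds 0)

/-- `h` is the product of the Laurent series `u` and `v`. -/
def IsLaurentMul {K : Type*} [NontriviallyNormedField K] (u v h : ℤ → K) : Prop :=
  ∀ i : ℤ, HasSum (fun j : ℤ => u j * v (i - j)) (h i)

/-- The Laurent series `1`. -/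
def laurentOne {K : Type*} [NontriviallyNormedField K] : ℤ → K :=
  fun i => if i = 0 then 1 else 0

/-! For `ρ < 1` close to `1` both `f` and `g` converge on `|T| = ρ`, and the Gauss norm
`|f|_ρ = max_i ‖f i‖ ρ^i` is multiplicative: at the index `i₀ + j₀` formed from the largest indices
where `‖f i‖ ρ^i` and `‖g j‖ ρ^j` are maximal, the convolution has a single strictly dominant
term. Hence `|f|_ρ |g|_ρ = |1|_ρ = 1`, so `‖f i‖ ‖g j‖ ρ^(i+j) ≤ 1`, and letting `ρ → 1` gives
`‖f i‖ ≤ ‖g j‖⁻¹` for any `j` with `g j ≠ 0`. -/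

open Filter Topology

section Maximizers

variable {ι : Type*} {a : ι → ℝ}

theorem finite_setOf_le_of_tendsto_zero (ha : Tendsto a cofinite (𝓝 0)) {c : ℝ} (hc : 0 < c) :
    {j | c ≤ a j}.Finite := by
  simpa using eventually_cofinite.mp (ha.eventually (gt_mem_nhds hc))

theorem exists_forall_le_of_tendsto_zero (ha : Tendsto a cofinite (𝓝 0)) {i₁ : ι}
    (hi₁ : 0 < a i₁) : ∃ i₀, ∀ j, a j ≤ a i₀ := by
  obtain ⟨i₀, hi₀, hmax⟩ := Set.exists_max_image _ a (finite_setOf_le_of_tendsto_zero ha hi₁)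
    ⟨i₁, show a i₁ ≤ a i₁ from le_rfl⟩
  exact ⟨i₀, fun j => (le_or_gt (a i₁) (a j)).elim (hmax j) fun h => h.le.trans hi₀⟩

def IsLastArgmax [LinearOrder ι] (a : ι → ℝ) (i₀ : ι) : Prop :=
  (∀ j, a j ≤ a i₀) ∧ ∀ j, i₀ < j → a j < a i₀

theorem exists_isLastArgmax_of_tendsto_zero [LinearOrder ι] (ha : Tendsto a cofinite (𝓝 0))
    {i₁ : ι} (hi₁ : 0 < a i₁) : ∃ i₀, IsLastArgmax a i₀ := by
  obtain ⟨m, hm⟩ := exists_forall_le_of_tendsto_zero ha hi₁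
  obtain ⟨i₀, hi₀, hlast⟩ := Set.exists_max_image _ id
    (finite_setOf_le_of_tendsto_zero ha (hi₁.trans_le (hm i₁))) ⟨m, show a m ≤ a m from le_rfl⟩
  have hi₀_eq : a i₀ = a m := le_antisymm (hm i₀) hi₀
  refine ⟨i₀, fun j => hi₀_eq ▸ hm j, fun j hj => ?_⟩
  by_contra! hle
  exact hj.not_ge (hlast j (hi₀_eq ▸ hle))

end Maximizers

section Ultrametric

variable {ι E : Type*} [NormedAddCommGroup E] [IsUltrametricDist E] {u : ι → E} {s : E}

theorem IsUltrametricDist.norm_lt_of_hasSum_of_forall_norm_lt [Nonempty ι] (hs : HasSum u s)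
    {r : ℝ} (hr : ∀ j, ‖u j‖ < r) : ‖s‖ < r := by
  obtain ⟨j₀, hj₀⟩ : ∃ j₀, ∀ j, ‖u j‖ ≤ ‖u j₀‖ := by
    by_cases! h : ∃ j, 0 < ‖u j‖
    · obtain ⟨j, hj⟩ := h
      exact exists_forall_le_of_tendsto_zero
        (by simpa using hs.summable.tendsto_cofinite_zero.norm) hj
    · exact ⟨Classical.arbitrary ι, fun j => (h j).trans (norm_nonneg _)⟩
  rw [← hs.tsum_eq]
  exact (IsUltrametricDist.norm_tsum_le_of_forall_le hj₀).trans_lt (hr j₀)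

theorem IsUltrametricDist.norm_eq_of_hasSum_of_forall_norm_lt (hs : HasSum u s) {i₀ : ι}
    (hi₀ : u i₀ ≠ 0) (hdom : ∀ j ≠ i₀, ‖u j‖ < ‖u i₀‖) : ‖s‖ = ‖u i₀‖ := by
  classical
  have hrest : HasSum (Function.update u i₀ 0) (s - u i₀) := by
    simpa [sub_eq_neg_add] using hs.update i₀ 0
  have hrest_lt : ‖s - u i₀‖ < ‖u i₀‖ := by
    have : Nonempty ι := ⟨i₀⟩
    refine IsUltrametricDist.norm_lt_of_hasSum_of_forall_norm_lt hrest fun j => ?_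
    rcases eq_or_ne j i₀ with rfl | hj
    · simpa using hi₀
    · simpa [hj] using hdom j hj
  calc ‖s‖ = ‖u i₀ + (s - u i₀)‖ := by rw [add_sub_cancel]
    _ = ‖u i₀‖ := by
      rw [IsUltrametricDist.norm_add_eq_max_of_norm_ne_norm hrest_lt.ne', max_eq_left hrest_lt.le]

end Ultrametric

section Laurent

variable {K : Type*} [NontriviallyNormedField K]

theorem laurentOne_ne_zero : (laurentOne : ℤ → K) ≠ 0 := fun h => by
  simpa [laurentOne] using congrFun h 0

theorem IsLaurentMul.left_ne_zero {u v h : ℤ → K} (huv : IsLaurentMul u v h) (hh : h ≠ 0) :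
    u ≠ 0 := by
  rintro rfl
  refine hh (funext fun i => ?_)
  have hsum := huv i
  simp only [Pi.zero_apply, zero_mul] at hsum ⊢
  exact hsum.unique hasSum_zero

theorem IsLaurentMul.right_ne_zero {u v h : ℤ → K} (huv : IsLaurentMul u v h) (hh : h ≠ 0) :
    v ≠ 0 := by
  rintro rfl
  refine hh (funext fun i => ?_)
  have hsum := huv i
  simp only [Pi.zero_apply, mul_zero] at hsum ⊢
  exact hsum.unique hasSum_zero

theorem MemRobba.eventually_tendsto {f : ℤ → K} (hf : MemRobba f) :
    ∀ᶠ ρ : ℝ in 𝓝[<] 1, Tendsto (fun i => ‖f i‖ * ρ ^ i) cofinite (𝓝 0) := by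
  obtain ⟨ρ₀, ⟨hρ₀, hρ₀_lt⟩, hconv⟩ := hf
  filter_upwards [Ioo_mem_nhdsLT (show (ρ₀ : ℝ) < 1 by exact_mod_cast hρ₀_lt)] with ρ hρ
  have := NNReal.tendsto_coe.mpr
    (hconv ⟨ρ, ρ₀.coe_nonneg.trans hρ.1.le⟩ ⟨NNReal.coe_le_coe.mp hρ.1.le, by exact_mod_cast hρ.2⟩)
  rwa [NNReal.coe_zero] at this

end Laurent

section GaussNorm

theorem norm_mul_mul_zpow_add {K : Type*} [NormedDivisionRing K] (x y : K) {ρ : ℝ} (hρ : 0 < ρ)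
    (i j : ℤ) : ‖x * y‖ * ρ ^ (i + j) = ‖x‖ * ρ ^ i * (‖y‖ * ρ ^ j) := by
  rw [norm_mul, zpow_add₀ hρ.ne']
  ring

variable {K : Type*} [NontriviallyNormedField K] [IsUltrametricDist K] {ρ : ℝ}

/-- Multiplicativity of the Gauss norm `|u|_ρ = max_i ‖u i‖ ρ^i`. -/
theorem IsLaurentMul.norm_mul_zpow_eq {u v h : ℤ → K} (huv : IsLaurentMul u v h) (hρ : 0 < ρ)
    {i₀ j₀ : ℤ} (hi₀ : IsLastArgmax (fun i => ‖u i‖ * ρ ^ i) i₀)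
    (hj₀ : IsLastArgmax (fun j => ‖v j‖ * ρ ^ j) j₀) :
    ‖h (i₀ + j₀)‖ * ρ ^ (i₀ + j₀) = ‖u i₀‖ * ρ ^ i₀ * (‖v j₀‖ * ρ ^ j₀) := by
  have hweight_nonneg : ∀ (w : ℤ → K) (i : ℤ), 0 ≤ ‖w i‖ * ρ ^ i := fun w i =>
    mul_nonneg (norm_nonneg _) (zpow_pos hρ i).le
  have hu_pos : 0 < ‖u i₀‖ * ρ ^ i₀ :=
    (hweight_nonneg u _).trans_lt (hi₀.2 _ (lt_add_one i₀))
  have hv_pos : 0 < ‖v j₀‖ * ρ ^ j₀ :=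
    (hweight_nonneg v _).trans_lt (hj₀.2 _ (lt_add_one j₀))
  have hdom : ∀ j ≠ i₀, ‖u j * v (i₀ + j₀ - j)‖ < ‖u i₀ * v (i₀ + j₀ - i₀)‖ := by
    intro j hj
    refine lt_of_mul_lt_mul_right ?_ (zpow_pos hρ (i₀ + j₀)).le
    have hsplit : ‖u j * v (i₀ + j₀ - j)‖ * ρ ^ (i₀ + j₀) =
        ‖u j‖ * ρ ^ j * (‖v (i₀ + j₀ - j)‖ * ρ ^ (i₀ + j₀ - j)) := by
      rw [← norm_mul_mul_zpow_add _ _ hρ, add_sub_cancel]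
    rw [hsplit, add_sub_cancel_left, norm_mul_mul_zpow_add _ _ hρ]
    rcases hj.lt_or_gt with hlt | hgt
    · calc _ ≤ ‖u i₀‖ * ρ ^ i₀ * (‖v (i₀ + j₀ - j)‖ * ρ ^ (i₀ + j₀ - j)) :=
            mul_le_mul_of_nonneg_right (hi₀.1 j) (hweight_nonneg v _)
        _ < _ := mul_lt_mul_of_pos_left (hj₀.2 _ (by linarith)) hu_pos
    · calc _ ≤ ‖u j‖ * ρ ^ j * (‖v j₀‖ * ρ ^ j₀) :=
            mul_le_mul_of_nonneg_left (hj₀.1 _) (hweight_nonneg u j)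
        _ < _ := mul_lt_mul_of_pos_right (hi₀.2 j hgt) hv_pos
  have hnonzero : u i₀ * v (i₀ + j₀ - i₀) ≠ 0 := by
    rw [add_sub_cancel_left, ← norm_pos_iff, norm_mul]
    exact mul_pos (pos_of_mul_pos_left hu_pos (zpow_pos hρ i₀).le)
      (pos_of_mul_pos_left hv_pos (zpow_pos hρ j₀).le)
  rw [IsUltrametricDist.norm_eq_of_hasSum_of_forall_norm_lt (huv _) hnonzero hdom,
    add_sub_cancel_left, norm_mul_mul_zpow_add _ _ hρ]

theorem IsLaurentMul.mul_zpow_le_one {f g : ℤ → K} (hfg : IsLaurentMul f g laurentOne)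
    (hρ : 0 < ρ) (hf : Tendsto (fun i => ‖f i‖ * ρ ^ i) cofinite (𝓝 0))
    (hg : Tendsto (fun i => ‖g i‖ * ρ ^ i) cofinite (𝓝 0)) (i j : ℤ) :
    ‖f i‖ * ρ ^ i * (‖g j‖ * ρ ^ j) ≤ 1 := by
  have hweight_pos : ∀ {w : ℤ → K}, w ≠ 0 → ∃ i, 0 < ‖w i‖ * ρ ^ i := fun hw => by
    obtain ⟨i, hi⟩ := Function.ne_iff.mp hw
    exact ⟨i, mul_pos (norm_pos_iff.mpr hi) (zpow_pos hρ i)⟩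
  obtain ⟨i₁, hi₁⟩ := hweight_pos (hfg.left_ne_zero laurentOne_ne_zero)
  obtain ⟨j₁, hj₁⟩ := hweight_pos (hfg.right_ne_zero laurentOne_ne_zero)
  obtain ⟨i₀, hi₀⟩ := exists_isLastArgmax_of_tendsto_zero hf hi₁
  obtain ⟨j₀, hj₀⟩ := exists_isLastArgmax_of_tendsto_zero hg hj₁
  have hgauss := hfg.norm_mul_zpow_eq hρ hi₀ hj₀
  have hf_pos : 0 < ‖f i₀‖ * ρ ^ i₀ := hi₁.trans_le (hi₀.1 i₁)
  have hprod_pos : 0 < ‖f i₀‖ * ρ ^ i₀ * (‖g j₀‖ * ρ ^ j₀) :=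
    mul_pos hf_pos (hj₁.trans_le (hj₀.1 j₁))
  have hdeg : i₀ + j₀ = 0 := by
    by_contra hne
    simp only [laurentOne, if_neg hne, norm_zero, zero_mul] at hgauss
    exact hprod_pos.ne' hgauss.symm
  calc _ ≤ ‖f i₀‖ * ρ ^ i₀ * (‖g j₀‖ * ρ ^ j₀) :=
        mul_le_mul (hi₀.1 i) (hj₀.1 j) (mul_nonneg (norm_nonneg _) (zpow_pos hρ j).le) hf_pos.le
    _ = 1 := by simpa [laurentOne, hdeg] using hgauss.symm

end GaussNorm

theorem units_of_Robba_ring_are_bounded_general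
    {K : Type*} [NontriviallyNormedField K] [IsUltrametricDist K]
    (f g : ℤ → K) (hf : MemRobba f) (hg : MemRobba g)
    (hfg : IsLaurentMul f g laurentOne) :
    ∃ C : ℝ, ∀ i : ℤ, ‖f i‖ ≤ C := by
  obtain ⟨j, hj⟩ := Function.ne_iff.mp (hfg.right_ne_zero laurentOne_ne_zero)
  refine ⟨‖g j‖⁻¹, fun i => ?_⟩
  have hlim : Tendsto (fun ρ : ℝ => ‖f i‖ * ρ ^ i * (‖g j‖ * ρ ^ j)) (𝓝[<] 1)
      (𝓝 (‖f i‖ * ‖g j‖)) := by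
    have : ContinuousAt (fun ρ : ℝ => ‖f i‖ * ρ ^ i * (‖g j‖ * ρ ^ j)) 1 := by
      fun_prop (disch := norm_num)
    simpa using this.tendsto.mono_left nhdsWithin_le_nhds
  have hprod : ‖f i‖ * ‖g j‖ ≤ 1 := by
    refine le_of_tendsto hlim ?_
    filter_upwards [hf.eventually_tendsto, hg.eventually_tendsto,
      Ioo_mem_nhdsLT zero_lt_one] with ρ hfρ hgρ hρ
    exact hfg.mul_zpow_le_one hρ.1 hfρ hgρ i j
  rw [← one_div, le_div_iff₀ (norm_pos_iff.mpr hj)]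
  exact hprod

theorem units_of_Robba_ring_are_bounded
    {K : Type*} [NontriviallyNormedField K] [IsUltrametricDist K] [CompleteSpace K]
    (f g : ℤ → K) (hf : MemRobba f) (hg : MemRobba g)
    (hfg : IsLaurentMul f g laurentOne) :
    ∃ C : ℝ, ∀ i : ℤ, ‖f i‖ ≤ C :=
  units_of_Robba_ring_are_bounded_general f g hf hg hfg
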